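/- Let G be a finite group and let K and L be distinct sol-components of G. Then K and L normalize each other, [K,L] ≤ Sol(K) ∩ Sol(L), and Sol(K) ∩ Sol(L) is a subnormal subgroup of Sol(G). -/

import Mathlib

open Pointwise

/-- A subgroup `H` of `G` is *subnormal* if there is a finite chain
`H = c 0 ⊴ c 1 ⊴ ⋯ ⊴ c n = G` with each term normal in the next. -/
def IsSubnormal {G : Type*} [Group G] (H : Subgroup G) : Prop :=
  ∃ (n : ℕ) (c : ℕ → Subgroup G), c 0 = H ∧ c n = ⊤ ∧
    ∀ i < n, c i ≤ c (i + 1) ∧ ((c i).subgroupOf (c (i + 1))).Normal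

/-- A group is *quasisimple* if it is perfect and its quotient by its center is simple. -/
def IsQuasisimpleGroup (Q : Type*) [Group Q] : Prop :=
  commutator Q = ⊤ ∧ IsSimpleGroup (Q ⧸ Subgroup.center Q)

/-- A *component* of `G` is a quasisimple subnormal subgroup. -/
def IsComponent {G : Type*} [Group G] (K : Subgroup G) : Prop :=
  IsSubnormal K ∧ IsQuasisimpleGroup ↥K

/-- The *layer* `E(G)`: the subgroup generated by all components of `G`. -/
def layer (G : Type*) [Group G] : Subgroup G :=
  sSup {K : Subgroup G | IsComponent K}

/-- `Sol(G)`: the join of all solvable normal subgroups of `G`. -/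
def solRadical (G : Type*) [Group G] : Subgroup G :=
  sSup {N : Subgroup G | N.Normal ∧ IsSolvable ↥N}

instance solRadical_normal (G : Type*) [Group G] : (solRadical G).Normal := by
  constructor
  intro n hn g
  have h : solRadical G ≤ (solRadical G).comap (MulAut.conj g).toMonoidHom := by
    apply sSup_le
    intro N hN x hx
    have hmem : g * x * g⁻¹ ∈ N := hN.1.conj_mem x hx g
    exact Subgroup.mem_comap.mpr
      (le_sSup hN (by simpa [MulAut.conj_apply] using hmem))
  simpa [MulAut.conj_apply] using h hn

/-- A *sol-component* of `G` is a perfect subnormal subgroup of `G` whose image in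
`G/Sol(G)` is a component of `G/Sol(G)`. -/
def IsSolComponent {G : Type*} [Group G] (K : Subgroup G) : Prop :=
  IsSubnormal K ∧ commutator ↥K = ⊤ ∧
    IsComponent (K.map (QuotientGroup.mk' (solRadical G)))

/-- `E_sol(G)`: the subgroup generated by all sol-components of `G`. -/
def solLayer (G : Type*) [Group G] : Subgroup G :=
  sSup {K : Subgroup G | IsSolComponent K}

/-!
Modulo `S = Sol(G)` the images of `K` and `L` are components, and they are distinct because a
perfect subgroup `Y ≤ X ⊔ S` of a subnormal subgroup `X` lies in `X` (along a subnormal chain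
`X ⊴ B`, the image of `Y` in `B/X` is perfect and solvable). Distinct components commute, by the
three subgroups lemma climbing a subnormal chain, so `[K,L] ≤ S`. Then each conjugate `Lᵏ`,
`k ∈ K`, is perfect and lies in `L ⊔ S`, hence in `L`; so `K` and `L` normalize each other and
`[K,L] ≤ K ∩ S ≤ Sol(K)`. Finally `Sol(K)` is a solvable subnormal subgroup of `G`, and such
subgroups lie in `Sol(G)`: `Sol` of a term of a subnormal chain is characteristic in it, hence
normalized by the next term.
-/

section

open Subgroup Group
open scoped commutatorElement

variable {G : Type*} [Group G]

theorem isSubnormal_iff_subgroup_isSubnormal {H : Subgroup G} :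
    _root_.IsSubnormal H ↔ Subgroup.IsSubnormal H := by
  constructor
  · rintro ⟨n, c, rfl, hn, hc⟩
    induction n generalizing c with
    | zero => exact hn ▸ .top
    | succ n ih =>
      exact .step _ (c 1) (hc 0 n.succ_pos).1
        (ih (fun i => c (i + 1)) hn fun i hi => hc (i + 1) (by omega)) (hc 0 n.succ_pos).2
  · intro h
    obtain ⟨n, c, hmono, hnormal, h0, hn⟩ := h.exists_chain
    exact ⟨n, c, h0, hn, fun i _ => ⟨hmono i.le_succ, hnormal i⟩⟩

theorem commutator_eq_top_of_surjective {G' : Type*} [Group G'] {f : G →* G'}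
    (hf : Function.Surjective f) (h : commutator G = ⊤) : commutator G' = ⊤ := by
  rw [_root_.commutator_def, ← map_top_of_surjective f hf, ← map_commutator,
    ← _root_.commutator_def, h]

theorem commutator_eq_self_of_commutator_eq_top {K : Subgroup G} (h : commutator K = ⊤) :
    ⁅K, K⁆ = K := by
  have := congrArg (map K.subtype) h
  rwa [_root_.commutator_def, map_commutator, ← MonoidHom.range_eq_map, range_subtype] at this

theorem MonoidHom.eq_one_of_commutator_eq_top {P Q : Type*} [Group P] [Group Q]
    [Group.IsSolvable Q] (hP : commutator P = ⊤) (f : P →* Q) : f = 1 := by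
  have htop : ∀ n, derivedSeries P n = ⊤ := fun n => by
    induction n with
    | zero => rfl
    | succ n ih => rw [derivedSeries_succ, ih, ← _root_.commutator_def, hP]
  obtain ⟨n, hn⟩ := Group.IsSolvable.solvable (G := Q)
  ext x
  have := map_derivedSeries_le_derivedSeries f n (mem_map_of_mem f ((htop n).symm ▸ mem_top x))
  rwa [hn, mem_bot] at this

theorem isSolvable_of_le {H K : Subgroup G} (h : H ≤ K) [Group.IsSolvable K] :
    Group.IsSolvable H :=
  isSolvable_of_isSolvable_injective (inclusion_injective h)

instance isSolvable_map {G' : Type*} [Group G'] (f : G →* G') (K : Subgroup G)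
    [Group.IsSolvable K] : Group.IsSolvable (K.map f) :=
  isSolvable_of_surjective (f.subgroupMap_surjective K)

theorem isSolvable_sup_of_normal {N M : Subgroup G} [M.Normal] [Group.IsSolvable N]
    [Group.IsSolvable M] : Group.IsSolvable ↥(N ⊔ M) := by
  rw [isSolvable_iff_subgroup_quotient (M.subgroupOf (N ⊔ M))]
  exact ⟨isSolvable_of_isSolvable_injective
      (f := (subgroupOfEquivOfLe le_sup_right).toMonoidHom) (MulEquiv.injective _),
    isSolvable_of_surjective (f := (QuotientGroup.quotientInfEquivProdNormalizerQuotient N M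
      le_normalizer_of_normal).toMonoidHom) (MulEquiv.surjective _)⟩

theorem le_solRadical {N : Subgroup G} [N.Normal] [Group.IsSolvable N] : N ≤ solRadical G :=
  le_sSup ⟨‹_›, ‹_›⟩

instance isSolvable_solRadical [Finite G] : Group.IsSolvable (solRadical G) := by
  have hclosed : SupClosed {N : Subgroup G | N.Normal ∧ Group.IsSolvable N} := by
    rintro N ⟨hN, hNs⟩ M ⟨hM, hMs⟩
    exact ⟨sup_normal N M, isSolvable_sup_of_normal⟩
  exact (hclosed.sSup_mem (Set.toFinite _) ⟨normal_bot, inferInstance⟩ subset_rfl).2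

instance solRadical_characteristic : (solRadical G).Characteristic := by
  refine characteristic_iff_map_le.mpr fun φ => map_le_iff_le_comap.mpr <| sSup_le ?_
  rintro N ⟨hN, hNs⟩
  have : Group.IsSolvable N := hNs
  have : (N.map φ.toMonoidHom).Normal := hN.map _ φ.surjective
  exact map_le_iff_le_comap.mp le_solRadical

theorem normalizer_le_normalizer_map_subtype (X : Subgroup G) (K : Subgroup X)
    [K.Characteristic] : normalizer X ≤ normalizer (K.map X.subtype : Set G) := by
  intro g hg
  rw [mem_normalizer_iff_map_conj_eq] at hg ⊢
  let φ : X ≃* X := ((MulAut.conj g).subgroupMap X).trans (MulEquiv.subgroupCongr hg)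
  have hφ : (MulAut.conj g : G →* G).comp X.subtype = X.subtype.comp φ.toMonoidHom := rfl
  rw [map_map, hφ, ← map_map, characteristic_iff_map_eq.mp ‹_›]

theorem le_map_solRadical {Y B : Subgroup G} (hYB : Y ≤ B) (hBY : B ≤ normalizer Y)
    [Group.IsSolvable Y] : Y ≤ (solRadical B).map B.subtype := by
  have := (normal_subgroupOf_iff_le_normalizer hYB).mpr hBY
  have := isSolvable_of_isSolvable_injective
    (f := (subgroupOfEquivOfLe hYB).toMonoidHom) (MulEquiv.injective _)
  simpa only [map_subgroupOf_eq_of_le hYB] using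
    map_mono (f := B.subtype) (le_solRadical (N := Y.subgroupOf B))

theorem inf_le_map_solRadical (K : Subgroup G) (S : Subgroup G) [S.Normal] [Group.IsSolvable S] :
    K ⊓ S ≤ (solRadical K).map K.subtype :=
  have := isSolvable_of_le (inf_le_right : K ⊓ S ≤ S)
  le_map_solRadical inf_le_left <|
    (le_inf le_normalizer le_normalizer_of_normal).trans inf_normalizer_le_normalizer_inf

theorem le_solRadical_of_isSubnormal [Finite G] {Y : Subgroup G} (hY : Y.IsSubnormal)
    [Group.IsSolvable Y] : Y ≤ solRadical G := by
  -- going up a step `X ⊴ B`, a solvable subgroup normalized by `X` lies in `Sol(X)`, which `B`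
  -- normalizes
  suffices ∀ H : Subgroup G, H.IsSubnormal →
      ∀ Y ≤ H, H ≤ normalizer Y → Group.IsSolvable Y → Y ≤ solRadical G from
    this Y hY Y le_rfl le_normalizer ‹_›
  intro H hH
  induction hH with
  | top =>
    intro Y _ hY _
    have := normalizer_eq_top_iff.mp (top_le_iff.mp hY)
    exact le_solRadical
  | step X B hXB _ hX ih =>
    intro Y hYX hXY _
    refine (le_map_solRadical hYX hXY).trans (ih _ ((map_subtype_le _).trans hXB) ?_ inferInstance)
    exact ((normal_subgroupOf_iff_le_normalizer hXB).mp hX).trans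
      (normalizer_le_normalizer_map_subtype X _)

theorem IsQuasisimpleGroup.eq_top_or_le_center {Q : Type*} [Group Q] (hQ : IsQuasisimpleGroup Q)
    (N : Subgroup Q) [N.Normal] : N = ⊤ ∨ N ≤ center Q := by
  obtain ⟨hperf, hsimple⟩ := hQ
  let π := QuotientGroup.mk' (center Q)
  rcases hsimple.eq_bot_or_eq_top_of_normal (N.map π) (.map ‹_› π (QuotientGroup.mk'_surjective _))
    with h | h
  · rw [Subgroup.map_eq_bot_iff, QuotientGroup.ker_mk'] at h
    exact .inr h
  · left
    have hsup : N ⊔ center Q = ⊤ := by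
      rw [← QuotientGroup.ker_mk' (center Q), ← comap_map_eq, h, comap_top]
    -- modulo `N` the group is the image of its center, hence abelian, and it is perfect
    let q := QuotientGroup.mk' N
    have hq : map q ⊤ = map q (center Q) := by
      rw [← hsup, Subgroup.map_sup, (Subgroup.map_eq_bot_iff _).mpr (QuotientGroup.ker_mk' N).ge,
        bot_sup_eq]
    have hcomm : map q (commutator Q) = ⊥ := by
      rw [_root_.commutator_def, map_commutator, hq, ← map_commutator,
        commutator_eq_bot_iff_le_centralizer.mpr (center_le_centralizer _), Subgroup.map_bot]
    rw [hperf, Subgroup.map_eq_bot_iff, QuotientGroup.ker_mk'] at hcomm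
    exact top_le_iff.mp hcomm

theorem IsQuasisimpleGroup.le_or_commutator_inf_eq_bot {K N : Subgroup G}
    (hK : IsQuasisimpleGroup K) (hN : K ≤ normalizer N) : K ≤ N ∨ ⁅K, N ⊓ K⁆ = ⊥ := by
  have := normal_subgroupOf_of_le_normalizer hN
  refine (hK.eq_top_or_le_center (N.subgroupOf K)).imp subgroupOf_eq_top.mp fun h => ?_
  refine commutator_eq_bot_iff_le_centralizer.mpr fun k hk x hx => ?_
  have hx' : (⟨x, hx.2⟩ : K) ∈ N.subgroupOf K := hx.1
  exact (congrArg Subtype.val (mem_center_iff.mp (h hx') ⟨k, hk⟩)).symm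

theorem commutator_eq_bot_of_commutator_inf_eq_bot {K N B : Subgroup G} (hK : ⁅K, K⁆ = K)
    (hKB : K ≤ B) (hNB : N ≤ normalizer B) (hKN : K ≤ normalizer N) (h : ⁅K, N ⊓ B⁆ = ⊥) :
    ⁅K, N⁆ = ⊥ := by
  have hle : ⁅K, N⁆ ≤ N ⊓ B := le_inf (le_normalizer_iff_commutator_le_right.mp hKN)
    ((commutator_mono hKB le_rfl).trans (le_normalizer_iff_commutator_le_left.mp hNB))
  have hKNK : ⁅⁅K, N⁆, K⁆ = ⊥ := by
    rw [eq_bot_iff, ← h, commutator_comm K (N ⊓ B)]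
    exact commutator_mono hle le_rfl
  rw [← hK]
  exact commutator_commutator_eq_bot_of_rotate hKNK (by rwa [commutator_comm N])

theorem IsQuasisimpleGroup.le_or_commutator_eq_bot_of_le_normalizer {K N : Subgroup G}
    (hq : IsQuasisimpleGroup K) (hK : K.IsSubnormal) (hN : K ≤ normalizer N) :
    K ≤ N ∨ ⁅K, N⁆ = ⊥ := by
  obtain ⟨n, f, hmono, hnormal, h0, hn⟩ := hK.exists_chain
  have hperf := commutator_eq_self_of_commutator_eq_top hq.1
  suffices ∀ i, K ≤ N ⊓ f i ∨ ⁅K, N ⊓ f i⁆ = ⊥ by simpa [hn] using this n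
  intro i
  induction i with
  | zero => simpa [h0] using hq.le_or_commutator_inf_eq_bot hN
  | succ i ih =>
    have hle : f i ≤ f (i + 1) := hmono i.le_succ
    have hKf : K ≤ f i := h0 ▸ hmono i.zero_le
    refine ih.imp (fun h => h.trans (inf_le_inf_left N hle)) fun h => ?_
    refine commutator_eq_bot_of_commutator_inf_eq_bot hperf hKf
      (inf_le_right.trans ((normal_subgroupOf_iff_le_normalizer hle).mp (hnormal i)))
      ((le_inf hN ((hKf.trans hle).trans le_normalizer)).trans inf_normalizer_le_normalizer_inf) ?_
    rwa [inf_assoc, inf_of_le_right hle]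

theorem IsQuasisimpleGroup.le_or_commutator_eq_bot_of_isSubnormal {K N : Subgroup G}
    (hq : IsQuasisimpleGroup K) (hK : K.IsSubnormal) (hN : N.IsSubnormal) :
    K ≤ N ∨ ⁅K, N⁆ = ⊥ := by
  induction hN with
  | top => exact .inl le_top
  | step N M hNM _ hN ih =>
    rcases ih with h | h
    · exact hq.le_or_commutator_eq_bot_of_le_normalizer hK
        (h.trans ((normal_subgroupOf_iff_le_normalizer hNM).mp hN))
    · exact .inr (eq_bot_iff.mpr (h ▸ commutator_mono le_rfl hNM))

theorem IsComponent.commutator_eq_bot {K L : Subgroup G} (hK : IsComponent K)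
    (hL : IsComponent L) (hne : K ≠ L) : ⁅K, L⁆ = ⊥ := by
  have hKs := isSubnormal_iff_subgroup_isSubnormal.mp hK.1
  have hLs := isSubnormal_iff_subgroup_isSubnormal.mp hL.1
  rcases hK.2.le_or_commutator_eq_bot_of_isSubnormal hKs hLs with hKL | h
  · rcases hL.2.le_or_commutator_eq_bot_of_isSubnormal hLs hKs with hLK | h
    · exact absurd (le_antisymm hKL hLK) hne
    · rwa [commutator_comm]
  · exact h

section PerfectSubnormal

variable {S : Subgroup G} [S.Normal] [Group.IsSolvable S]

theorem le_of_le_sup_of_normal_subgroupOf {X B Y : Subgroup G} (hXB : X ≤ B)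
    [(X.subgroupOf B).Normal] (hYB : Y ≤ B) (hY : commutator Y = ⊤) (hYXS : Y ≤ X ⊔ S) :
    Y ≤ X := by
  let q := QuotientGroup.mk' (X.subgroupOf B)
  let ψ := q.comp (inclusion (inf_le_right : S ⊓ B ≤ B))
  have := isSolvable_of_le (inf_le_left : S ⊓ B ≤ S)
  have := isSolvable_of_surjective ψ.rangeRestrict_surjective
  -- modulo `X`, every element of `Y` agrees with its `S`-part, which lies in `B`
  have hψ : ∀ y : Y, q (inclusion hYB y) ∈ ψ.range := by
    rintro ⟨y, hy⟩
    obtain ⟨s, hs, x, hx, rfl⟩ := mem_sup_of_normal_left.mp (sup_comm X S ▸ hYXS hy)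
    have hsB : s ∈ B := (mul_mem_cancel_right (hXB hx)).mp (hYB hy)
    have hqx : q ⟨x, hXB hx⟩ = 1 := (QuotientGroup.eq_one_iff _).mpr (mem_subgroupOf.mpr hx)
    refine ⟨⟨s, mem_inf.mpr ⟨hs, hsB⟩⟩, ?_⟩
    calc ψ ⟨s, _⟩ = q ⟨s, hsB⟩ * q ⟨x, hXB hx⟩ := by rw [hqx, mul_one]; rfl
      _ = q (inclusion hYB ⟨s * x, hy⟩) := (map_mul q _ _).symm
  intro y hy
  have := DFunLike.congr_fun
    (MonoidHom.eq_one_of_commutator_eq_top hY ((q.comp (inclusion hYB)).codRestrict _ hψ)) ⟨y, hy⟩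
  exact mem_subgroupOf.mp ((QuotientGroup.eq_one_iff _).mp (congrArg Subtype.val this))

theorem le_of_le_sup_of_isSubnormal {X Y : Subgroup G} (hX : X.IsSubnormal)
    (hY : commutator Y = ⊤) (hYXS : Y ≤ X ⊔ S) : Y ≤ X := by
  induction hX with
  | top => exact le_top
  | step X B hXB _ hX ih =>
    exact le_of_le_sup_of_normal_subgroupOf hXB (ih (hYXS.trans (sup_le_sup_right hXB S))) hY hYXS

theorem le_normalizer_of_commutator_le {K L : Subgroup G} (hL : L.IsSubnormal)
    (hLp : commutator L = ⊤) (hKL : ⁅K, L⁆ ≤ S) : K ≤ normalizer L := by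
  refine le_normalizer_iff.mpr fun k hk l hl => ?_
  have hconj : L.map (MulAut.conj k : G →* G) ≤ L ⊔ S := by
    rintro _ ⟨l, hl, rfl⟩
    have : (MulAut.conj k : G →* G) l = ⁅k, l⁆ * l := by simp [commutatorElement_def]
    rw [this]
    exact mul_mem (mem_sup_right (hKL (commutator_mem_commutator hk hl))) (mem_sup_left hl)
  exact le_of_le_sup_of_isSubnormal hL
    (commutator_eq_top_of_surjective (MonoidHom.subgroupMap_surjective _ L) hLp) hconj
    (mem_map_of_mem _ hl)

end PerfectSubnormal

section SolComponents

variable [Finite G]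

theorem IsSolComponent.eq_of_map_eq {K L : Subgroup G} (hK : IsSolComponent K)
    (hL : IsSolComponent L) (h : K.map (QuotientGroup.mk' (solRadical G)) =
      L.map (QuotientGroup.mk' (solRadical G))) : K = L := by
  have hle : ∀ {A B : Subgroup G}, A.map (QuotientGroup.mk' (solRadical G)) =
      B.map (QuotientGroup.mk' (solRadical G)) → A ≤ B ⊔ solRadical G := fun hAB => by
    rw [← QuotientGroup.ker_mk' (solRadical G), ← comap_map_eq, ← hAB]
    exact le_comap_map _ _
  exact le_antisymm
    (le_of_le_sup_of_isSubnormal (isSubnormal_iff_subgroup_isSubnormal.mp hL.1) hK.2.1 (hle h))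
    (le_of_le_sup_of_isSubnormal (isSubnormal_iff_subgroup_isSubnormal.mp hK.1) hL.2.1
      (hle h.symm))

theorem IsSolComponent.commutator_le_solRadical {K L : Subgroup G} (hK : IsSolComponent K)
    (hL : IsSolComponent L) (hne : K ≠ L) : ⁅K, L⁆ ≤ solRadical G := by
  have h := hK.2.2.commutator_eq_bot hL.2.2 (mt (hK.eq_of_map_eq hL) hne)
  rwa [← map_commutator, Subgroup.map_eq_bot_iff, QuotientGroup.ker_mk'] at h

end SolComponents

end

/-- Distinct sol-components `K`, `L` of `G` normalize each other,
`[K,L] ≤ Sol(K) ∩ Sol(L)`, and `Sol(K) ∩ Sol(L)` is contained in `Sol(G)` and is a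
subnormal subgroup of `Sol(G)`. -/
theorem distinct_solComponents_commute_mod_solRadical
    {G : Type*} [Group G] [Finite G] (K L : Subgroup G)
    (hK : IsSolComponent K) (hL : IsSolComponent L) (hne : K ≠ L) :
    K ≤ Subgroup.normalizer (L : Set G) ∧ L ≤ Subgroup.normalizer (K : Set G) ∧
      ⁅K, L⁆ ≤ (solRadical ↥K).map K.subtype ⊓ (solRadical ↥L).map L.subtype ∧
      (solRadical ↥K).map K.subtype ⊓ (solRadical ↥L).map L.subtype ≤ solRadical G ∧
      IsSubnormal (((solRadical ↥K).map K.subtype ⊓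
        (solRadical ↥L).map L.subtype).subgroupOf (solRadical G)) := by
  have hKs := isSubnormal_iff_subgroup_isSubnormal.mp hK.1
  have hLs := isSubnormal_iff_subgroup_isSubnormal.mp hL.1
  have hKL := hK.commutator_le_solRadical hL hne
  have hKnL := le_normalizer_of_commutator_le hLs hL.2.1 hKL
  have hLnK := le_normalizer_of_commutator_le hKs hK.2.1 (Subgroup.commutator_comm L K ▸ hKL)
  have hSolK := (solRadical_normal K).isSubnormal.trans' hKs
  have hSolL := (solRadical_normal L).isSubnormal.trans' hLs
  refine ⟨hKnL, hLnK, le_inf ?_ ?_, inf_le_left.trans (le_solRadical_of_isSubnormal hSolK),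
    isSubnormal_iff_subgroup_isSubnormal.mpr (hSolK.inf hSolL).subgroupOf⟩
  · exact (le_inf (Subgroup.le_normalizer_iff_commutator_le_left.mp hLnK) hKL).trans
      (inf_le_map_solRadical K _)
  · exact (le_inf (Subgroup.le_normalizer_iff_commutator_le_right.mp hKnL) hKL).trans
      (inf_le_map_solRadical L _)
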